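/- Let c ∈ ℝ and let F(v) := c · ∂(v²) for v ∈ C([0,1],ℝ), where ∂ is the distributional derivative. Then for all v, w ∈ C([0,1],ℝ): ‖F(v) − F(w)‖_{H^{−1}} = |c| · (∑_{n=1}^∞ 2 |∫_0^1 (v(x)² − w(x)²) cos(nπx) dx|²)^{1/2} ≤ |c| (‖v‖_∞ + ‖w‖_∞) ‖v − w‖_∞. In particular, for every r ∈ (0,∞) and all v, w with ‖v‖_∞ ≤ r and ‖w‖_∞ ≤ r one has ‖F(v) − F(w)‖_{H^{−1}} ≤ 2 r |c| ‖v − w‖_∞, so F is Lipschitz on bounded subsets of C([0,1],ℝ) with values in H^{−1}((0,1),ℝ). -/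

import Mathlib

/-!
The factor `c` comes out of every cosine coefficient, hence `|c|` out of the norm. The functions
`√2 cos(nπx)`, `n ≥ 1`, are orthonormal in `L²(0,1)`, so Bessel's inequality gives
`‖∂u‖_{H^{-1}} ≤ ‖u‖_{L²(0,1)} ≤ ‖u‖_∞`. Applied to `u = v² - w² = (v + w)(v - w)`, whose sup norm
is at most `(‖v‖_∞ + ‖w‖_∞) ‖v - w‖_∞`, this is the Lipschitz bound.
-/

open MeasureTheory Real

noncomputable section

/-- The `n`-th cosine coefficient `∫_0^1 u(x) cos(nπx) dx` (with the index shift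
`n ↦ n+1`, so that the modes are `n = 1, 2, …`). -/
def cosCoeff (u : ℝ → ℝ) (n : ℕ) : ℝ :=
  ∫ x in (0:ℝ)..1, u x * Real.cos (((n:ℝ) + 1) * Real.pi * x)

/-- The `H^{−1}` norm of the distributional derivative `∂u` of `u ∈ L²((0,1),ℝ)`:
`‖∂u‖_{H^{−1}} = (∑_{n=1}^∞ 2 |∫_0^1 u(x) cos(nπx) dx|²)^{1/2}`. -/
def derivHm1norm (u : ℝ → ℝ) : ℝ :=
  Real.sqrt (∑' n : ℕ, 2 * (cosCoeff u n) ^ 2)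

end

open Set

local notation "μ₀₁" => volume.restrict (Ioc (0:ℝ) 1)

lemma integral_cos_int_mul_pi_mul (k : ℤ) :
    ∫ x in (0:ℝ)..1, cos (k * π * x) = if k = 0 then 1 else 0 := by
  split_ifs with hk
  · simp [hk]
  · have hkπ : (k:ℝ) * π ≠ 0 := mul_ne_zero (Int.cast_ne_zero.2 hk) pi_ne_zero
    rw [intervalIntegral.integral_comp_mul_left (fun x => cos x) hkπ]
    simp [sin_int_mul_pi]

lemma integral_cos_mul_cos_nat_succ (m n : ℕ) :
    ∫ x in (0:ℝ)..1, cos ((m + 1) * π * x) * cos ((n + 1) * π * x) =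
      if m = n then 1 / 2 else 0 := by
  have product_to_sum : ∀ x : ℝ, cos ((m + 1) * π * x) * cos ((n + 1) * π * x) =
      (cos (((m - n : ℤ) : ℝ) * π * x) + cos (((m + n + 2 : ℤ) : ℝ) * π * x)) / 2 := by
    intro x
    have h := two_mul_cos_mul_cos ((m + 1) * π * x) ((n + 1) * π * x)
    push_cast
    rw [show (m + 1) * π * x - (n + 1) * π * x = (m - n) * π * x by ring,
      show (m + 1) * π * x + (n + 1) * π * x = (m + n + 2) * π * x by ring] at h
    linarith
  have hcos_integrable : ∀ k : ℤ, IntervalIntegrable (fun x => cos (k * π * x)) volume 0 1 :=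
    fun k => (continuous_cos.comp (continuous_const.mul continuous_id)).intervalIntegrable 0 1
  simp_rw [product_to_sum]
  rw [intervalIntegral.integral_div,
    intervalIntegral.integral_add (hcos_integrable _) (hcos_integrable _),
    integral_cos_int_mul_pi_mul, integral_cos_int_mul_pi_mul]
  have hsum : (m + n + 2 : ℤ) ≠ 0 := by omega
  simp only [if_neg hsum, sub_eq_zero, Int.natCast_inj, add_zero]
  split_ifs <;> norm_num

lemma real_inner_toLp_toLp {α : Type*} [MeasurableSpace α] {μ : Measure α} {f g : α → ℝ}
    (hf : MemLp f 2 μ) (hg : MemLp g 2 μ) :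
    inner ℝ (hf.toLp f) (hg.toLp g) = ∫ x, f x * g x ∂μ := by
  rw [L2.inner_def]
  refine integral_congr_ae ?_
  filter_upwards [hf.coeFn_toLp, hg.coeFn_toLp] with x hfx hgx
  simp [hfx, hgx, mul_comm]

lemma memLp_restrict_Ioc_of_abs_le {u : ℝ → ℝ} {a b M : ℝ} {p : ENNReal}
    (hu : AEStronglyMeasurable u (volume.restrict (Ioc a b))) (hM : ∀ x ∈ Ioc a b, |u x| ≤ M) :
    MemLp u p (volume.restrict (Ioc a b)) :=
  MemLp.of_bound hu M ((ae_restrict_iff' measurableSet_Ioc).2 (ae_of_all _ hM))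

noncomputable def cosMode (n : ℕ) (x : ℝ) : ℝ := √2 * cos ((n + 1) * π * x)

lemma continuous_cosMode (n : ℕ) : Continuous (cosMode n) := by
  unfold cosMode
  fun_prop

lemma memLp_cosMode (n : ℕ) : MemLp (cosMode n) 2 μ₀₁ := by
  refine memLp_restrict_Ioc_of_abs_le (continuous_cosMode n).aestronglyMeasurable
    (M := √2) fun x _ => ?_
  rw [cosMode, abs_mul, abs_of_nonneg (sqrt_nonneg 2)]
  exact mul_le_of_le_one_right (sqrt_nonneg 2) (abs_cos_le_one _)

noncomputable def cosModeLp (n : ℕ) : Lp ℝ 2 μ₀₁ := (memLp_cosMode n).toLp _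

lemma orthonormal_cosModeLp : Orthonormal ℝ cosModeLp := by
  rw [orthonormal_iff_ite]
  intro m n
  have hmode : ∀ x,
      cosMode m x * cosMode n x = 2 * (cos ((m + 1) * π * x) * cos ((n + 1) * π * x)) := fun x => by
    rw [cosMode, cosMode, mul_mul_mul_comm, mul_self_sqrt zero_le_two]
  rw [cosModeLp, cosModeLp, real_inner_toLp_toLp, ← intervalIntegral.integral_of_le zero_le_one]
  simp_rw [hmode]
  rw [intervalIntegral.integral_const_mul, integral_cos_mul_cos_nat_succ]
  split_ifs <;> norm_num

lemma inner_cosModeLp {u : ℝ → ℝ} (hu : MemLp u 2 μ₀₁) (n : ℕ) :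
    inner ℝ (cosModeLp n) (hu.toLp u) = √2 * cosCoeff u n := by
  rw [cosModeLp, real_inner_toLp_toLp, cosCoeff, intervalIntegral.integral_of_le zero_le_one,
    ← integral_const_mul]
  simp only [cosMode]
  congr 1 with x
  ring

lemma tsum_two_mul_cosCoeff_sq_le {u : ℝ → ℝ} (hu : MemLp u 2 μ₀₁) :
    ∑' n, 2 * cosCoeff u n ^ 2 ≤ ∫ x in Ioc (0:ℝ) 1, u x ^ 2 := by
  have bessel := orthonormal_cosModeLp.tsum_inner_products_le (hu.toLp u)
  have hnorm : ‖hu.toLp u‖ ^ 2 = ∫ x in Ioc (0:ℝ) 1, u x ^ 2 := by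
    simp_rw [← real_inner_self_eq_norm_sq, real_inner_toLp_toLp, sq]
  simp_rw [inner_cosModeLp, norm_mul, norm_of_nonneg (sqrt_nonneg 2), mul_pow,
    sq_sqrt zero_le_two, norm_eq_abs, sq_abs, hnorm] at bessel
  exact bessel

lemma derivHm1norm_le_of_abs_le {u : ℝ → ℝ} {M : ℝ} (hu : AEStronglyMeasurable u μ₀₁)
    (hM : ∀ x ∈ Ioc (0:ℝ) 1, |u x| ≤ M) : derivHm1norm u ≤ M := by
  have hM₀ : 0 ≤ M := (abs_nonneg _).trans (hM 1 (right_mem_Ioc.2 zero_lt_one))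
  have hL2 : ∫ x in Ioc (0:ℝ) 1, u x ^ 2 ≤ M ^ 2 := by
    calc ∫ x in Ioc (0:ℝ) 1, u x ^ 2 ≤ ∫ _ in Ioc (0:ℝ) 1, M ^ 2 := by
          refine setIntegral_mono_on (memLp_restrict_Ioc_of_abs_le hu hM).integrable_sq
            (integrableOn_const (by simp)) measurableSet_Ioc fun x hx => ?_
          exact sq_le_sq' (abs_le.1 (hM x hx)).1 (abs_le.1 (hM x hx)).2
      _ = M ^ 2 := by simp
  calc derivHm1norm u ≤ √(M ^ 2) :=
        sqrt_le_sqrt ((tsum_two_mul_cosCoeff_sq_le (memLp_restrict_Ioc_of_abs_le hu hM)).trans hL2)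
    _ = M := sqrt_sq hM₀

lemma derivHm1norm_const_mul (c : ℝ) (u : ℝ → ℝ) :
    derivHm1norm (fun x => c * u x) = |c| * derivHm1norm u := by
  have hcoeff : ∀ n, cosCoeff (fun x => c * u x) n = c * cosCoeff u n := fun n => by
    rw [cosCoeff, cosCoeff, ← intervalIntegral.integral_const_mul]
    simp only [mul_assoc]
  simp_rw [derivHm1norm, hcoeff, mul_pow, mul_left_comm (2:ℝ), tsum_mul_left,
    sqrt_mul (sq_nonneg c), sqrt_sq_eq_abs]

lemma abs_le_iSup_abs_of_continuousOn {f : ℝ → ℝ} {a b x : ℝ} (hf : ContinuousOn f (Icc a b))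
    (hx : x ∈ Icc a b) : |f x| ≤ ⨆ y : Icc a b, |f y| := by
  have hbdd := isCompact_Icc.bddAbove_image hf.abs
  rw [image_eq_range] at hbdd
  exact le_ciSup hbdd ⟨x, hx⟩

lemma abs_sq_sub_sq_le {a b A B D : ℝ} (ha : |a| ≤ A) (hb : |b| ≤ B) (hab : |a - b| ≤ D) :
    |a ^ 2 - b ^ 2| ≤ (A + B) * D := by
  rw [sq_sub_sq, abs_mul]
  exact mul_le_mul ((abs_add_le a b).trans (add_le_add ha hb)) hab (abs_nonneg _)
    (add_nonneg ((abs_nonneg a).trans ha) ((abs_nonneg b).trans hb))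

/-- **Lemma `BurgerNonl`.** Let `c ∈ ℝ` and `F(v) = c ∂(v²)`. For all
continuous `v, w : [0,1] → ℝ`:
`‖F(v) − F(w)‖_{H^{−1}} = |c| (∑_{n≥1} 2 |∫_0^1 (v² − w²) cos(nπx) dx|²)^{1/2}
  ≤ |c| (‖v‖_∞ + ‖w‖_∞) ‖v − w‖_∞`,
and in particular `‖F(v) − F(w)‖_{H^{−1}} ≤ 2 r |c| ‖v − w‖_∞` whenever
`‖v‖_∞, ‖w‖_∞ ≤ r`. -/
theorem stmt_8 (c : ℝ) (v w : ℝ → ℝ)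
    (hv : ContinuousOn v (Set.Icc (0:ℝ) 1)) (hw : ContinuousOn w (Set.Icc (0:ℝ) 1)) :
    derivHm1norm (fun x => c * (v x ^ 2 - w x ^ 2)) =
      |c| * derivHm1norm (fun x => v x ^ 2 - w x ^ 2) ∧
    |c| * derivHm1norm (fun x => v x ^ 2 - w x ^ 2) ≤
      |c| * ((⨆ x : Set.Icc (0:ℝ) 1, |v x|) + ⨆ x : Set.Icc (0:ℝ) 1, |w x|) *
        ⨆ x : Set.Icc (0:ℝ) 1, |v x - w x| ∧
    ∀ r : ℝ, 0 < r → (⨆ x : Set.Icc (0:ℝ) 1, |v x|) ≤ r →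
      (⨆ x : Set.Icc (0:ℝ) 1, |w x|) ≤ r →
      derivHm1norm (fun x => c * (v x ^ 2 - w x ^ 2)) ≤
        2 * r * |c| * ⨆ x : Set.Icc (0:ℝ) 1, |v x - w x| := by
  have hvw := hv.sub hw
  have hbound : derivHm1norm (fun x => v x ^ 2 - w x ^ 2) ≤
      ((⨆ x : Icc (0:ℝ) 1, |v x|) + ⨆ x : Icc (0:ℝ) 1, |w x|) * ⨆ x : Icc (0:ℝ) 1, |v x - w x| :=
    derivHm1norm_le_of_abs_le
      ((((hv.pow 2).sub (hw.pow 2)).mono Ioc_subset_Icc_self).aestronglyMeasurable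
        measurableSet_Ioc)
      fun x hx => abs_sq_sub_sq_le (abs_le_iSup_abs_of_continuousOn hv (Ioc_subset_Icc_self hx))
        (abs_le_iSup_abs_of_continuousOn hw (Ioc_subset_Icc_self hx))
        (abs_le_iSup_abs_of_continuousOn hvw (Ioc_subset_Icc_self hx))
  refine ⟨derivHm1norm_const_mul c _, ?_, fun r _ hvr hwr => ?_⟩
  · rw [mul_assoc]
    exact mul_le_mul_of_nonneg_left hbound (abs_nonneg c)
  · have hD₀ : 0 ≤ ⨆ x : Icc (0:ℝ) 1, |v x - w x| :=
      (abs_nonneg _).trans (abs_le_iSup_abs_of_continuousOn hvw (left_mem_Icc.2 zero_le_one))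
    rw [derivHm1norm_const_mul]
    calc |c| * derivHm1norm (fun x => v x ^ 2 - w x ^ 2)
        ≤ |c| * ((r + r) * ⨆ x : Icc (0:ℝ) 1, |v x - w x|) :=
          mul_le_mul_of_nonneg_left
            (hbound.trans (mul_le_mul_of_nonneg_right (add_le_add hvr hwr) hD₀)) (abs_nonneg c)
      _ = 2 * r * |c| * ⨆ x : Icc (0:ℝ) 1, |v x - w x| := by ring
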